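/- Let A, B be finite sets of positive rationals in F_{Q,Q'} and n ≥ 1. Suppose that for all coprime positive integers r, s we have |A_{r/s}||B_{r/s}| < |A||B| (QQ')^{1/(n(n+1))} / (4T (rs)^{1/n}), where T = max_{m ≤ QQ'} τ(m). Then for x = T^n (QQ')^{1/(n+1)}, the sum over coprime pairs (r,s) with rs > x of |A_{r/s}||B_{r/s}| is at most |A||B|/2. -/

import Mathlib

/-- The set `F_{Q,Q'} = {q/q' : 1 ≤ q ≤ Q, 1 ≤ q' ≤ Q', q, q' positive integers}`. -/
def farey (Q Q' : ℝ) : Set ℚ :=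
  {z : ℚ | ∃ q q' : ℕ, 1 ≤ q ∧ (q : ℝ) ≤ Q ∧ 1 ≤ q' ∧ (q' : ℝ) ≤ Q' ∧ z = (q : ℚ) / (q' : ℚ)}

/-- `A_{r/s} = {a/a' ∈ A : r ∣ a, s ∣ a'}` (fractions in lowest terms). -/
def subAt (A : Finset ℚ) (r s : ℕ) : Finset ℚ :=
  A.filter (fun a : ℚ => r ∣ a.num.toNat ∧ s ∣ a.den)

/-- `T(x) = max_{1 ≤ m ≤ x} τ(m)`. -/
noncomputable def Tmax (x : ℝ) : ℕ := (Finset.Icc 1 ⌊x⌋₊).sup (fun m => m.divisors.card)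

/-! Each `a ∈ F_{Q,Q'}` has lowest-terms numerator `u ≤ Q` and denominator `v ≤ Q'`. As `u, v`
are coprime, the pairs `(r, s)` with `r ∣ u`, `s ∣ v` number `τ(u)τ(v) = τ(uv) ≤ T`, so every `a`
lies in at most `T` of the sets `A_{r/s}`: hence `Σ |A_{r/s}| ≤ |A| T`, and likewise for `B`. For
`rs > x` the hypothesis gives `|A_{r/s}||B_{r/s}| ≤ |A||B| / (4T²)`, since
`x^{1/n} = T (QQ')^{1/(n(n+1))}`. Cauchy–Schwarz then bounds the square of the tail sum by
`|A||B|/(4T²) · |A|T · |B|T = (|A||B|/2)²`. -/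

open Finset

lemma sq_sum_mul_le_mul_sum_mul_sum {ι R : Type*} [CommSemiring R] [LinearOrder R]
    [IsStrictOrderedRing R] [ExistsAddOfLE R] (s : Finset ι) {f g : ι → R} {C : R}
    (hf : ∀ i ∈ s, 0 ≤ f i) (hg : ∀ i ∈ s, 0 ≤ g i) (hfg : ∀ i ∈ s, f i * g i ≤ C) :
    (∑ i ∈ s, f i * g i) ^ 2 ≤ C * ((∑ i ∈ s, f i) * ∑ i ∈ s, g i) := by
  obtain rfl | ⟨j, hj⟩ := s.eq_empty_or_nonempty
  · simp
  have hC : 0 ≤ C := (mul_nonneg (hf j hj) (hg j hj)).trans (hfg j hj)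
  have hsq : ∀ i ∈ s, (f i * g i) ^ 2 ≤ f i * (C * g i) := fun i hi =>
    calc (f i * g i) ^ 2 = (f i * g i) * (f i * g i) := sq _
      _ ≤ (f i * g i) * C := mul_le_mul_of_nonneg_left (hfg i hi) (mul_nonneg (hf i hi) (hg i hi))
      _ = f i * (C * g i) := by ring
  calc (∑ i ∈ s, f i * g i) ^ 2 ≤ (∑ i ∈ s, f i) * ∑ i ∈ s, C * g i :=
        sum_sq_le_sum_mul_sum_of_sq_le_mul s hf (fun i hi => mul_nonneg hC (hg i hi)) hsq
    _ = C * ((∑ i ∈ s, f i) * ∑ i ∈ s, g i) := by rw [← mul_sum]; ring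

lemma card_filter_dvd_le_card_divisors_mul {u v : ℕ} (hu : u ≠ 0) (hv : v ≠ 0)
    (huv : u.Coprime v) (S : Finset (ℕ × ℕ)) :
    #(S.filter fun p => p.1 ∣ u ∧ p.2 ∣ v) ≤ #(u * v).divisors := by
  rw [huv.card_divisors_mul, ← card_product]
  refine card_le_card fun p hp => ?_
  rw [mem_filter] at hp
  simp [hp.2, hu, hv]

lemma card_divisors_le_Tmax {x : ℝ} {m : ℕ} (hm : m ≠ 0) (hmx : (m : ℝ) ≤ x) :
    #m.divisors ≤ Tmax x :=
  le_sup (f := fun k : ℕ => #k.divisors)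
    (mem_Icc.mpr ⟨Nat.one_le_iff_ne_zero.mpr hm, Nat.le_floor hmx⟩)

lemma one_le_Tmax {x : ℝ} (hx : 1 ≤ x) : 1 ≤ Tmax x := by
  simpa using card_divisors_le_Tmax one_ne_zero (by simpa using hx)

lemma num_pos_and_num_den_le_of_mem_farey {Q Q' : ℝ} {a : ℚ} (ha : a ∈ farey Q Q') :
    0 < a.num ∧ (a.num : ℝ) ≤ Q ∧ (a.den : ℝ) ≤ Q' := by
  obtain ⟨q, q', hq, hqQ, hq', hq'Q', rfl⟩ := ha
  have hq'0 : (q' : ℤ) ≠ 0 := by omega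
  have hdiv : (q : ℚ) / q' = Rat.divInt q q' := by rw [Rat.divInt_eq_div]; push_cast; rfl
  have hnum : ((q : ℚ) / q').num ≤ q :=
    Int.le_of_dvd (by omega) (hdiv ▸ Rat.num_dvd _ hq'0)
  have hden : ((q : ℚ) / q').den ≤ q' :=
    Nat.le_of_dvd (by omega) (by exact_mod_cast hdiv ▸ Rat.den_dvd q q')
  refine ⟨Rat.num_pos.mpr (by positivity), ?_, ?_⟩
  · exact le_trans (by exact_mod_cast hnum) hqQ
  · exact le_trans (by exact_mod_cast hden) hq'Q'

lemma card_filter_dvd_num_den_le_Tmax {Q Q' : ℝ} {a : ℚ} (ha : a ∈ farey Q Q')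
    (S : Finset (ℕ × ℕ)) :
    #(S.filter fun p => p.1 ∣ a.num.toNat ∧ p.2 ∣ a.den) ≤ Tmax (Q * Q') := by
  obtain ⟨hpos, hnum, hden⟩ := num_pos_and_num_den_le_of_mem_farey ha
  have hcast : ((a.num.toNat : ℕ) : ℝ) = a.num := by exact_mod_cast Int.toNat_of_nonneg hpos.le
  have hu : a.num.toNat ≠ 0 := by omega
  have hcop : a.num.toNat.Coprime a.den := by
    rw [show a.num.toNat = a.num.natAbs by omega]
    exact a.reduced
  refine (card_filter_dvd_le_card_divisors_mul hu a.den_ne_zero hcop S).trans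
    (card_divisors_le_Tmax (mul_ne_zero hu a.den_ne_zero) ?_)
  rw [Nat.cast_mul, hcast]
  exact mul_le_mul hnum hden (by positivity) ((Int.cast_pos.mpr hpos).le.trans hnum)

lemma sum_card_subAt_le {Q Q' : ℝ} {A : Finset ℚ} (hA : ↑A ⊆ farey Q Q')
    (S : Finset (ℕ × ℕ)) :
    ∑ p ∈ S, #(subAt A p.1 p.2) ≤ #A * Tmax (Q * Q') :=
  calc ∑ p ∈ S, #(subAt A p.1 p.2)
      = ∑ a ∈ A, #(S.filter fun p => p.1 ∣ a.num.toNat ∧ p.2 ∣ a.den) := by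
        simp only [subAt, card_filter]
        exact sum_comm
    _ ≤ #A * Tmax (Q * Q') := by
        simpa using sum_le_card_nsmul A _ _ fun a ha => card_filter_dvd_num_den_le_Tmax (hA ha) S

lemma pow_mul_rpow_rpow_one_div {n : ℕ} (hn : n ≠ 0) {T z : ℝ} (hT : 0 ≤ T) (hz : 0 ≤ z) :
    (T ^ n * z ^ ((1 : ℝ) / (n + 1))) ^ ((1 : ℝ) / n) = T * z ^ ((1 : ℝ) / (n * (n + 1))) := by
  rw [Real.mul_rpow (by positivity) (by positivity), ← Real.rpow_natCast, ← Real.rpow_mul hT,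
    ← Real.rpow_mul hz]
  congr 1
  · rw [mul_one_div_cancel (by positivity), Real.rpow_one]
  · congr 1
    field_simp

lemma div_rpow_le_of_pow_mul_rpow_lt {n : ℕ} (hn : n ≠ 0) {K T z y : ℝ} (hK : 0 ≤ K)
    (hT : 0 < T) (hz : 0 < z) (hy : T ^ n * z ^ ((1 : ℝ) / (n + 1)) < y) :
    K * z ^ ((1 : ℝ) / (n * (n + 1))) / (4 * T * y ^ ((1 : ℝ) / n)) ≤ K / (4 * T ^ 2) :=
  calc K * z ^ ((1 : ℝ) / (n * (n + 1))) / (4 * T * y ^ ((1 : ℝ) / n))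
      ≤ K * z ^ ((1 : ℝ) / (n * (n + 1))) /
          (4 * T * (T ^ n * z ^ ((1 : ℝ) / (n + 1))) ^ ((1 : ℝ) / n)) := by
        gcongr
    _ = K / (4 * T ^ 2) := by
        rw [pow_mul_rpow_rpow_one_div hn hT.le hz.le]
        field_simp

/-- If for every pair of coprime positive integers `r, s` we have
`|A_{r/s}||B_{r/s}| < |A||B| (QQ')^{1/(n(n+1))} / (4T (rs)^{1/n})`, then for
`x = Tⁿ (QQ')^{1/(n+1)}` the tail sum `Σ_{gcd(r,s)=1, rs > x} |A_{r/s}||B_{r/s}|`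
is at most `|A||B|/2`. -/
theorem tail_sum_small (n : ℕ) (hn : 1 ≤ n) (Q Q' : ℝ) (hQ : 1 ≤ Q) (hQ' : 1 ≤ Q')
    (A B : Finset ℚ) (hA : ↑A ⊆ farey Q Q') (hB : ↑B ⊆ farey Q Q')
    (hsmall : ∀ r s : ℕ, 0 < r → 0 < s → Nat.Coprime r s →
      (((subAt A r s).card * (subAt B r s).card : ℕ) : ℝ) <
        (A.card : ℝ) * B.card * (Q * Q') ^ ((1 : ℝ) / (n * (n + 1))) /
          (4 * (Tmax (Q * Q') : ℝ) * ((r * s : ℕ) : ℝ) ^ ((1 : ℝ) / n)))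
    (x : ℝ) (hx : x = (Tmax (Q * Q') : ℝ) ^ n * (Q * Q') ^ ((1 : ℝ) / (n + 1))) :
    ((∑ p ∈ ((Finset.Icc 1 ⌊Q⌋₊) ×ˢ (Finset.Icc 1 ⌊Q'⌋₊)).filter
        (fun p : ℕ × ℕ => Nat.Coprime p.1 p.2 ∧ x < ((p.1 * p.2 : ℕ) : ℝ)),
        (subAt A p.1 p.2).card * (subAt B p.1 p.2).card : ℕ) : ℝ)
      ≤ (A.card : ℝ) * B.card / 2 := by
  set S := ((Icc 1 ⌊Q⌋₊) ×ˢ (Icc 1 ⌊Q'⌋₊)).filter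
    (fun p : ℕ × ℕ => Nat.Coprime p.1 p.2 ∧ x < ((p.1 * p.2 : ℕ) : ℝ))
  have hT : 0 < (Tmax (Q * Q') : ℝ) :=
    Nat.cast_pos.mpr (one_le_Tmax (one_le_mul_of_one_le_of_one_le hQ hQ'))
  have hsumA : ∑ p ∈ S, (#(subAt A p.1 p.2) : ℝ) ≤ #A * Tmax (Q * Q') := by
    exact_mod_cast sum_card_subAt_le hA S
  have hsumB : ∑ p ∈ S, (#(subAt B p.1 p.2) : ℝ) ≤ #B * Tmax (Q * Q') := by
    exact_mod_cast sum_card_subAt_le hB S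
  generalize (Tmax (Q * Q') : ℝ) = T at *
  have hterm : ∀ p ∈ S,
      (#(subAt A p.1 p.2) : ℝ) * #(subAt B p.1 p.2) ≤ #A * #B / (4 * T ^ 2) := by
    intro p hp
    simp only [S, mem_filter, mem_product, mem_Icc] at hp
    have h := hsmall p.1 p.2 (by omega) (by omega) hp.2.1
    rw [Nat.cast_mul] at h
    exact h.le.trans (div_rpow_le_of_pow_mul_rpow_lt (by omega) (by positivity) hT
      (by positivity) (hx ▸ hp.2.2))
  have hcs := sq_sum_mul_le_mul_sum_mul_sum S (fun _ _ => by positivity) (fun _ _ => by positivity)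
    hterm
  push_cast
  refine le_of_pow_le_pow_left₀ two_ne_zero (by positivity) (hcs.trans ?_)
  calc (#A * #B / (4 * T ^ 2) : ℝ) * ((∑ p ∈ S, (#(subAt A p.1 p.2) : ℝ)) *
        ∑ p ∈ S, (#(subAt B p.1 p.2) : ℝ))
      ≤ #A * #B / (4 * T ^ 2) * ((#A * T) * (#B * T)) := by
        gcongr
    _ = (#A * #B / 2) ^ 2 := by field_simp; ring
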